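/- Let p be an odd integer, a_1,...,a_r integers with pairwise differences coprime to p, and V the r×r Vandermonde matrix over R_p = F_2[x]/(1+x^p) with entries x^{(j-1)a_i}. For every v ∈ R_p^r with v_1(1) = ... = v_r(1), there exists u ∈ R_p^r with u·V = v; moreover, any two solutions u, u' satisfy u ≡ u' componentwise modulo M_p(x). -/

import Mathlib

/-!
Write `M = ∑_{n<p} X^n`, so that `1 + X^p = X^p - 1 = (X - 1) M` over `ZMod 2`; the two factors are
coprime because `M(1) = p = 1`. Modulo `M` the class `ξ` of `X` satisfies `ξ^p = 1` and `ξ - 1` is a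
unit. For `d` prime to `p` some power of `ξ^d` is `ξ`, so `ξ^d - 1` divides the unit `ξ - 1`; hence
the Vandermonde matrix `(ξ^{j a_i})` is invertible, and the system is uniquely solvable modulo `M`.
Modulo `X - 1` every `X^{j a_i}` becomes `1` and the system reduces to `∑ u_i(1) = v_j(1)`, which
the common value of the `v_j(1)` makes consistent; adding a multiple of `M` to one `u_i` adjusts
`∑ u_i(1)` without changing the solution modulo `M`.
-/

open Polynomial Matrix

theorem Matrix.isUnit_det_vandermonde {R : Type*} [CommRing R] {n : ℕ} {v : Fin n → R}
    (hv : Pairwise fun i j => IsUnit (v i - v j)) : IsUnit (vandermonde v).det := by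
  rw [det_vandermonde]
  simp only [IsUnit.prod_iff, Finset.mem_Ioi]
  exact fun i _ j hij => hv hij.ne'

section PowSubOne

variable {S : Type*} [CommRing S] {ξ : S} {p : ℕ}

theorem isUnit_pow_sub_one_of_coprime (hξ : ξ ^ p = 1) (h1 : IsUnit (ξ - 1)) {d : ℕ}
    (hd : d.Coprime p) : IsUnit (ξ ^ d - 1) := by
  obtain ⟨m, hm⟩ :=
    exists_pow_eq_self_of_coprime (hd.coprime_dvd_right (orderOf_dvd_of_pow_eq_one hξ))
  refine isUnit_of_dvd_unit ?_ h1
  simpa [hm] using sub_dvd_pow_sub_pow (ξ ^ d) 1 m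

theorem isUnit_pow_sub_pow_of_gcd_eq_one (hξ : ξ ^ p = 1) (hp : p ≠ 0) (h1 : IsUnit (ξ - 1))
    {m n : ℕ} (h : Int.gcd ((m : ℤ) - n) p = 1) : IsUnit (ξ ^ m - ξ ^ n) := by
  wlog hnm : n ≤ m generalizing m n
  · rw [← neg_sub, IsUnit.neg_iff]
    exact this (by rwa [← neg_sub, Int.neg_gcd]) (le_of_not_ge hnm)
  obtain ⟨d, rfl⟩ := Nat.exists_eq_add_of_le hnm
  rw [pow_add, ← mul_sub_one]
  refine ((IsUnit.of_pow_eq_one hξ hp).pow n).mul (isUnit_pow_sub_one_of_coprime hξ h1 ?_)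
  simpa using h

theorem Matrix.isUnit_det_vandermonde_pow (hξ : ξ ^ p = 1) (hp : p ≠ 0) (h1 : IsUnit (ξ - 1))
    {r : ℕ} {a : Fin r → ℕ} (ha : ∀ i j, i ≠ j → Int.gcd ((a i : ℤ) - a j) p = 1) :
    IsUnit (vandermonde fun i => ξ ^ a i).det :=
  isUnit_det_vandermonde fun i j hij => isUnit_pow_sub_pow_of_gcd_eq_one hξ hp h1 (ha i j hij)

end PowSubOne

theorem Ideal.Quotient.isUnit_mk_of_isCoprime {R : Type*} [CommRing R] {a b : R}
    (h : IsCoprime a b) : IsUnit (Ideal.Quotient.mk (Ideal.span {b}) a) := by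
  obtain ⟨x, y, hxy⟩ := h
  refine .of_mul_eq_one (Ideal.Quotient.mk _ x) ?_
  rw [← map_mul, mul_comm, ← sub_eq_iff_eq_add.mpr hxy.symm]
  simp

namespace Polynomial

variable {R : Type*} [CommRing R]

theorem isCoprime_X_sub_C_of_isUnit_eval {a : R} {q : R[X]} (h : IsUnit (q.eval a)) :
    IsCoprime (X - C a) q := by
  rw [← modByMonic_add_div q (X - C a), modByMonic_X_sub_C_eq_C_eval,
    IsCoprime.add_mul_left_right_iff]
  simpa using (isCoprime_mul_unit_left_right (isUnit_C.mpr h) (X - C a) 1).mpr isCoprime_one_right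

variable {p : ℕ}

theorem isCoprime_X_sub_one_geom_sum (hp : IsUnit (p : R)) :
    IsCoprime (X - 1) (∑ n ∈ Finset.range p, (X : R[X]) ^ n) := by
  rw [← C_1]
  exact isCoprime_X_sub_C_of_isUnit_eval (by simpa using hp)

theorem X_pow_sub_one_dvd_iff (hp : IsUnit (p : R)) {f : R[X]} :
    X ^ p - 1 ∣ f ↔ f.eval 1 = 0 ∧ (∑ n ∈ Finset.range p, (X : R[X]) ^ n) ∣ f := by
  rw [← mul_geom_sum, ← IsRoot.def, ← dvd_iff_isRoot, C_1]
  exact ⟨fun h => ⟨dvd_of_mul_right_dvd h, dvd_of_mul_left_dvd h⟩,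
    fun h => (isCoprime_X_sub_one_geom_sum hp).mul_dvd h.1 h.2⟩

theorem mk_X_pow_eq_one :
    Ideal.Quotient.mk (Ideal.span {∑ n ∈ Finset.range p, (X : R[X]) ^ n}) X ^ p = 1 := by
  rw [← map_pow, ← map_one (Ideal.Quotient.mk _), Ideal.Quotient.mk_eq_mk_iff_sub_mem,
    Ideal.mem_span_singleton]
  exact Dvd.intro_left _ (mul_geom_sum X p)

theorem isUnit_mk_X_sub_one (hp : IsUnit (p : R)) :
    IsUnit (Ideal.Quotient.mk (Ideal.span {∑ n ∈ Finset.range p, (X : R[X]) ^ n}) X - 1) := by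
  simpa using Ideal.Quotient.isUnit_mk_of_isCoprime (isCoprime_X_sub_one_geom_sum hp)

theorem map_sum_mul_X_pow_eq_vecMul_vandermonde {T : Type*} [CommRing T] (φ : R[X] →+* T)
    {r : ℕ} (a : Fin r → ℕ) (u : Fin r → R[X]) (j : Fin r) :
    φ (∑ i, u i * X ^ ((j : ℕ) * a i)) = ((φ ∘ u) ᵥ* vandermonde fun i => φ X ^ a i) j := by
  simp [vecMul, dotProduct, ← pow_mul, mul_comm]

theorem exists_lift_sum_eval_eq {ι : Type*} [Fintype ι] [Nonempty ι] {M : R[X]} {a : R}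
    (hM : IsUnit (M.eval a)) (ū : ι → R[X] ⧸ Ideal.span {M}) (c : R) :
    ∃ u : ι → R[X], (∀ i, Ideal.Quotient.mk _ (u i) = ū i) ∧ ∑ i, (u i).eval a = c := by
  classical
  choose w hw using fun i => Ideal.Quotient.mk_surjective (ū i)
  obtain ⟨i₀⟩ := ‹Nonempty ι›
  set δ := C ((c - ∑ i, (w i).eval a) * ↑hM.unit⁻¹) * M
  refine ⟨fun i => w i + (Pi.single i₀ δ : ι → R[X]) i, fun i => ?_, ?_⟩
  · rw [map_add, hw, add_eq_left, Ideal.Quotient.eq_zero_iff_mem]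
    rcases eq_or_ne i i₀ with rfl | hi
    · simpa using Ideal.mul_mem_left _ _ (Ideal.mem_span_singleton_self M)
    · simp [hi]
  · rw [← eval_finsetSum, Finset.sum_add_distrib, Finset.sum_pi_single',
      if_pos (Finset.mem_univ _)]
    simp [δ, eval_finsetSum, mul_assoc]

variable {r : ℕ} {a : Fin r → ℕ}

theorem isUnit_vandermonde_mk_X_pow (hp : IsUnit (p : R)) (hp₀ : p ≠ 0)
    (ha : ∀ i j, i ≠ j → Int.gcd ((a i : ℤ) - a j) p = 1) :
    IsUnit (vandermonde fun i =>
      Ideal.Quotient.mk (Ideal.span {∑ n ∈ Finset.range p, (X : R[X]) ^ n}) X ^ a i) :=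
  (isUnit_iff_isUnit_det _).mpr <|
    isUnit_det_vandermonde_pow mk_X_pow_eq_one hp₀ (isUnit_mk_X_sub_one hp) ha

theorem exists_X_pow_sub_one_dvd_sum_mul_X_pow_sub (hp : IsUnit (p : R)) (hp₀ : p ≠ 0)
    (ha : ∀ i j, i ≠ j → Int.gcd ((a i : ℤ) - a j) p = 1) (v : Fin r → R[X])
    (hv : ∀ j₁ j₂, (v j₁).eval 1 = (v j₂).eval 1) :
    ∃ u : Fin r → R[X], ∀ j : Fin r, X ^ p - 1 ∣ ∑ i, u i * X ^ ((j : ℕ) * a i) - v j := by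
  set π := Ideal.Quotient.mk (Ideal.span {∑ n ∈ Finset.range p, (X : R[X]) ^ n})
  rcases isEmpty_or_nonempty (Fin r) with hr | hr
  · exact ⟨0, isEmptyElim⟩
  obtain ⟨ū, hū⟩ :=
    vecMul_surjective_iff_isUnit.mpr (isUnit_vandermonde_mk_X_pow hp hp₀ ha) (π ∘ v)
  have hM : IsUnit ((∑ n ∈ Finset.range p, (X : R[X]) ^ n).eval 1) := by simpa using hp
  obtain ⟨u, hlift, hsum⟩ := exists_lift_sum_eval_eq hM ū ((v hr.some).eval 1)
  have hπu : π ∘ u = ū := by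
    ext i
    exact hlift i
  refine ⟨u, fun j => (X_pow_sub_one_dvd_iff hp).mpr ⟨?_, ?_⟩⟩
  · simp [eval_finsetSum, hsum, hv hr.some j]
  · rw [← Ideal.mem_span_singleton, ← Ideal.Quotient.mk_eq_mk_iff_sub_mem,
      map_sum_mul_X_pow_eq_vecMul_vandermonde, hπu]
    exact congrFun hū j

theorem geom_sum_dvd_sub_of_X_pow_sub_one_dvd_sum_mul_X_pow_sub (hp : IsUnit (p : R))
    (hp₀ : p ≠ 0) (ha : ∀ i j, i ≠ j → Int.gcd ((a i : ℤ) - a j) p = 1) {u u' : Fin r → R[X]}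
    (h : ∀ j : Fin r, X ^ p - 1 ∣ ∑ i, u i * X ^ ((j : ℕ) * a i) - ∑ i, u' i * X ^ ((j : ℕ) * a i))
    (i : Fin r) : (∑ n ∈ Finset.range p, (X : R[X]) ^ n) ∣ u i - u' i := by
  set π := Ideal.Quotient.mk (Ideal.span {∑ n ∈ Finset.range p, (X : R[X]) ^ n})
  have hπ : (π ∘ u) ᵥ* vandermonde (fun i => π X ^ a i) =
      (π ∘ u') ᵥ* vandermonde (fun i => π X ^ a i) := by
    ext j
    rw [← map_sum_mul_X_pow_eq_vecMul_vandermonde, ← map_sum_mul_X_pow_eq_vecMul_vandermonde,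
      Ideal.Quotient.mk_eq_mk_iff_sub_mem, Ideal.mem_span_singleton]
    exact (Dvd.intro_left _ (mul_geom_sum X p)).trans (h j)
  rw [← Ideal.mem_span_singleton, ← Ideal.Quotient.mk_eq_mk_iff_sub_mem]
  exact congrFun (vecMul_injective_of_isUnit (isUnit_vandermonde_mk_X_pow hp hp₀ ha) hπ) i

end Polynomial

theorem vandermonde_solvable_and_unique_mod_Mp (p r : ℕ) (hp : Odd p) (a : Fin r → ℕ)
    (ha : ∀ i j : Fin r, i ≠ j → Int.gcd ((a i : ℤ) - (a j : ℤ)) (p : ℤ) = 1)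
    (v : Fin r → Polynomial (ZMod 2))
    (hv : ∀ j₁ j₂ : Fin r, (v j₁).eval 1 = (v j₂).eval 1) :
    (∃ u : Fin r → Polynomial (ZMod 2), ∀ j : Fin r,
      Ideal.Quotient.mk (Ideal.span ({1 + X ^ p} : Set (Polynomial (ZMod 2))))
          (∑ i : Fin r, u i * X ^ ((j : ℕ) * a i))
        = Ideal.Quotient.mk (Ideal.span ({1 + X ^ p} : Set (Polynomial (ZMod 2)))) (v j)) ∧
    ∀ u u' : Fin r → Polynomial (ZMod 2),
      (∀ j : Fin r,
        Ideal.Quotient.mk (Ideal.span ({1 + X ^ p} : Set (Polynomial (ZMod 2))))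
            (∑ i : Fin r, u i * X ^ ((j : ℕ) * a i))
          = Ideal.Quotient.mk (Ideal.span ({1 + X ^ p} : Set (Polynomial (ZMod 2)))) (v j)) →
      (∀ j : Fin r,
        Ideal.Quotient.mk (Ideal.span ({1 + X ^ p} : Set (Polynomial (ZMod 2))))
            (∑ i : Fin r, u' i * X ^ ((j : ℕ) * a i))
          = Ideal.Quotient.mk (Ideal.span ({1 + X ^ p} : Set (Polynomial (ZMod 2)))) (v j)) →
      ∀ i : Fin r,
        Ideal.Quotient.mk (Ideal.span
            ({∑ n ∈ Finset.range p, (X : Polynomial (ZMod 2)) ^ n} : Set (Polynomial (ZMod 2))))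
            (u i)
          = Ideal.Quotient.mk (Ideal.span
            ({∑ n ∈ Finset.range p, (X : Polynomial (ZMod 2)) ^ n} : Set (Polynomial (ZMod 2))))
            (u' i) := by
  have hp2 : IsUnit (p : ZMod 2) := by simp [ZMod.natCast_eq_one_iff_odd.mpr hp]
  have hXp : (1 + X ^ p : (ZMod 2)[X]) = X ^ p - 1 := by rw [CharTwo.sub_eq_add, add_comm]
  simp only [hXp, Ideal.Quotient.mk_eq_mk_iff_sub_mem, Ideal.mem_span_singleton]
  refine ⟨exists_X_pow_sub_one_dvd_sum_mul_X_pow_sub hp2 hp.pos.ne' ha v hv,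
    fun u u' hu hu' => geom_sum_dvd_sub_of_X_pow_sub_one_dvd_sum_mul_X_pow_sub hp2 hp.pos.ne' ha
      fun j => by simpa using dvd_sub (hu j) (hu' j)⟩
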